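/- (Pointwise Criterion) Let →_o and →_b be relations from terms to multidistributions, and ⇒_o, ⇒_b their liftings to multidistributions. If for every term M, M →_b 𝔫 and M →_o 𝔰 imply the existence of 𝔯 with 𝔫 ⇒_o 𝔯 and 𝔰 ⇒_b 𝔯, then ⇒_o and ⇒_b diamond-commute: for all multidistributions 𝔪, if 𝔪 ⇒_b 𝔫 and 𝔪 ⇒_o 𝔰, then there exists 𝔯 with 𝔫 ⇒_o 𝔯 and 𝔰 ⇒_b 𝔯. -/

import Mathlib

open scoped NNReal ENNReal

/-- A (raw) multidistribution on `X`: a finite multiset of weighted elements. -/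
abbrev MDist (X : Type) := Multiset (ℝ≥0 × X)

namespace MDist

/-- Scalar multiplication of a multidistribution. -/
def scale {X : Type} (p : ℝ≥0) (m : MDist X) : MDist X :=
  m.map fun q => (p * q.1, q.2)

/-- The singleton multidistribution `[1 M]`. -/
def single {X : Type} (M : X) : MDist X := {(1, M)}

/-- A multidistribution is proper when every weight lies in `(0,1]` and the
weights sum to at most `1`. -/
def Proper {X : Type} (m : MDist X) : Prop :=
  (∀ q ∈ m, 0 < q.1 ∧ q.1 ≤ 1) ∧ (m.map Prod.fst).sum ≤ 1

/-- The probability that the distribution associated to a multidistribution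
assigns to an event `A`. -/
noncomputable def mass {X : Type} (m : MDist X) (A : Set X) : ℝ≥0∞ :=
  (m.map fun q => A.indicator (fun _ => (q.1 : ℝ≥0∞)) q.2).sum

end MDist

/-- One component of the lifting: either keep the term or perform a step. -/
def LiftTerm {X : Type} (r : X → MDist X → Prop) (M : X) (m : MDist X) : Prop :=
  m = MDist.single M ∨ r M m

/-- The lifting of a relation `r ⊆ X × MDist X` to a binary relation on
multidistributions. -/
inductive Lift {X : Type} (r : X → MDist X → Prop) : MDist X → MDist X → Prop
  | nil : Lift r 0 0
  | cons {p : ℝ≥0} {M : X} {m s t : MDist X} :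
      LiftTerm r M m → Lift r s t → Lift r ((p, M) ::ₘ s) (MDist.scale p m + t)

/-!
Lifting is compositional: it commutes with sums and scaling, and a lifting step out of `(p, M) ::ₘ s`
splits into a step of the component `M` and a step of the rest `s`, whichever position `(p, M)`
occupied in the derivation (multisets are unordered). So two liftings of the same multidistribution
are joined component by component, by the hypothesis when both components step and trivially when one
of them stays put, and the local joins are reassembled with the weights of the components.
-/

namespace MDist

variable {X : Type}

@[simp]
lemma scale_one (m : MDist X) : scale 1 m = m := by
  simp [scale]

@[simp]
lemma scale_add (p : ℝ≥0) (a b : MDist X) : scale p (a + b) = scale p a + scale p b := by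
  simp [scale]

@[simp]
lemma scale_scale (p q : ℝ≥0) (a : MDist X) : scale p (scale q a) = scale (p * q) a := by
  simp [scale, Multiset.map_map, mul_assoc]

@[simp]
lemma scale_cons (p q : ℝ≥0) (M : X) (s : MDist X) :
    scale p ((q, M) ::ₘ s) = (p * q, M) ::ₘ scale p s := by
  simp [scale]

end MDist

namespace Lift

variable {X : Type} {r : X → MDist X → Prop}

lemma refl (m : MDist X) : Lift r m m := by
  induction m using Multiset.induction with
  | empty => exact nil
  | cons a s ih =>
    simpa [MDist.single, MDist.scale, Multiset.singleton_add] using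
      cons (p := a.1) (M := a.2) (Or.inl rfl) ih

lemma single {M : X} {m : MDist X} (h : LiftTerm r M m) : Lift r (MDist.single M) m := by
  simpa [MDist.single] using cons (p := 1) h nil

lemma add {a b c d : MDist X} (hab : Lift r a b) (hcd : Lift r c d) :
    Lift r (a + c) (b + d) := by
  induction hab with
  | nil => simpa using hcd
  | cons hM _ ih =>
    rw [Multiset.cons_add, add_assoc]
    exact cons hM ih

lemma scale {a b : MDist X} (p : ℝ≥0) (h : Lift r a b) :
    Lift r (MDist.scale p a) (MDist.scale p b) := by
  induction h with
  | nil => exact nil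
  | cons hM _ ih =>
    rw [MDist.scale_cons, MDist.scale_add, MDist.scale_scale]
    exact cons hM ih

lemma eq_zero_of_zero {t : MDist X} (h : Lift r 0 t) : t = 0 := by
  generalize hm : (0 : MDist X) = m at h
  cases h with
  | nil => rfl
  | cons => exact absurd hm.symm Multiset.cons_ne_zero

lemma exists_of_cons {p : ℝ≥0} {M : X} {s t : MDist X} (h : Lift r ((p, M) ::ₘ s) t) :
    ∃ n u, LiftTerm r M n ∧ Lift r s u ∧ t = MDist.scale p n + u := by
  generalize hm : (p, M) ::ₘ s = m at h
  induction h generalizing s with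
  | nil => exact absurd hm Multiset.cons_ne_zero
  | @cons q N n' s' t' hN hs' ih =>
    rcases Multiset.cons_eq_cons.mp hm with ⟨hpM, rfl⟩ | ⟨_, s'', rfl, hs''⟩
    · obtain ⟨rfl, rfl⟩ := Prod.mk.inj hpM
      exact ⟨n', t', hN, hs', rfl⟩
    · obtain ⟨n, u, hn, hu, rfl⟩ := ih hs''.symm
      exact ⟨n, MDist.scale q n' + u, hn, cons hN hu, add_left_comm _ _ _⟩

end Lift

lemma LiftTerm.join {X : Type} {ro rb : X → MDist X → Prop}
    (h : ∀ (M : X) (n s : MDist X), rb M n → ro M s → ∃ r, Lift ro n r ∧ Lift rb s r)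
    {M : X} {n s : MDist X} (hn : LiftTerm rb M n) (hs : LiftTerm ro M s) :
    ∃ r, Lift ro n r ∧ Lift rb s r := by
  rcases hn with rfl | hn
  · exact ⟨s, Lift.single hs, Lift.refl s⟩
  rcases hs with rfl | hs
  · exact ⟨n, Lift.refl n, Lift.single (Or.inr hn)⟩
  exact h M n s hn hs

theorem pointwise_criterion_general {X : Type}
    (ro rb : X → MDist X → Prop)
    (h : ∀ (M : X) (n s : MDist X), rb M n → ro M s →
      ∃ r, Lift ro n r ∧ Lift rb s r) :
    ∀ m n s : MDist X, Lift rb m n → Lift ro m s →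
      ∃ r, Lift ro n r ∧ Lift rb s r := by
  intro m n s hb
  induction hb generalizing s with
  | nil =>
    intro ho
    rw [Lift.eq_zero_of_zero ho]
    exact ⟨0, Lift.nil, Lift.nil⟩
  | @cons p M nM m' n' hM _ ih =>
    intro ho
    obtain ⟨sM, s', hsM, hs', rfl⟩ := Lift.exists_of_cons ho
    obtain ⟨rM, hrMo, hrMb⟩ := LiftTerm.join h hM hsM
    obtain ⟨r', hr'o, hr'b⟩ := ih s' hs'
    exact ⟨MDist.scale p rM + r', (hrMo.scale p).add hr'o, (hrMb.scale p).add hr'b⟩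

/-- Pointwise Criterion: if single steps of `→_b` and `→_o` from a common term
can be joined by the liftings, then the liftings `⇒_b` and `⇒_o`
diamond-commute. -/
theorem pointwise_criterion {X : Type} [Countable X]
    (ro rb : X → MDist X → Prop)
    (h : ∀ (M : X) (n s : MDist X), rb M n → ro M s →
      ∃ r, Lift ro n r ∧ Lift rb s r) :
    ∀ m n s : MDist X, Lift rb m n → Lift ro m s →
      ∃ r, Lift ro n r ∧ Lift rb s r :=
  pointwise_criterion_general ro rb h
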